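/- arXiv:1101.3427 — 5 statements merged into one kernel-verified Lean document; each statement's English description precedes it below -/
import Mathlib

section
/- Let R be a commutative ring, n ≥ 1, k ≥ 1, and let M^{(1)},…,M^{(k)} be n×n matrices over R. For ordered k-tuples 𝓘 = (I_1,…,I_k) and 𝓙 = (J_1,…,J_k) of pairwise disjoint subsets of {1,…,n} whose unions are {1,…,n}, write 𝓘 ∼ 𝓙 if |I_a| = |J_a| for all a, and in that case let ε(𝓘,𝓙) be the sign of the unique permutation of {1,…,n} that, for each a, maps the r-th smallest element of I_a to the r-th smallest element of J_a. Then det( Σ_{a=1}^k M^{(a)} ) = Σ_{𝓘 ∼ 𝓙} ε(𝓘,𝓙) · ∏_{a=1}^k det( M^{(a)}_{I_a, J_a} ), where the sum is over all pairs of compatible k-tuples, and M^{(a)}_{I_a,J_a} denotes the submatrix of M^{(a)} with rows indexed by I_a and columns indexed by J_a, each taken in increasing order. -/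
/-!
Expanding the determinant multilinearly, first along the rows and then along the columns, writes
`det (∑ a, M a)` as the sum over pairs of colourings `(c, d)` of `det P_{c,d}`, where `P_{c,d}`
keeps entry `(i, j)` of `M (c i)` when `c i = d j` and is zero elsewhere. Every nonzero term of
its Leibniz expansion is a permutation carrying the fibres of `d` onto those of `c`, so its
determinant vanishes unless corresponding fibres have equal sizes. When they do, permuting the
columns by the monotone matching of the fibres makes `P_{c,d}` block diagonal along `c`, with the
minors `M(a)_{I_a, J_a}` as blocks.
-/

open Finset Matrix

def Matrix.colorMatrix {ι κ R : Type*} [DecidableEq κ] [Zero R] (M : κ → Matrix ι ι R)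
    (c d : ι → κ) : Matrix ι ι R :=
  of fun i j => if c i = d j then M (c i) i j else 0

section
variable {ι κ R : Type*} [Fintype ι] [DecidableEq ι] [Fintype κ] [CommRing R]

theorem Matrix.det_sum_eq_sum_det_row_choice (N : κ → Matrix ι ι R) :
    (∑ a, N a).det = ∑ c : ι → κ, (of fun i j => N (c i) i j).det := by
  have hrows := (detRowAlternating : (ι → R) [⋀^ι]→ₗ[R] R).toMultilinearMap.map_sum
    fun i a => N a i
  simp only [Finset.sum_fn] at hrows
  have hsum : ∑ a, N a = of fun i j => ∑ a, N a i j := by ext; simp [sum_apply]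
  rw [hsum]
  exact hrows

theorem Matrix.det_sum_eq_sum_det_col_choice (N : κ → Matrix ι ι R) :
    (∑ a, N a).det = ∑ d : ι → κ, (of fun i j => N (d j) i j).det := by
  rw [← det_transpose, transpose_sum, det_sum_eq_sum_det_row_choice]
  exact sum_congr rfl fun d _ => (det_transpose _).symm

variable [DecidableEq κ]

theorem Matrix.det_sum_eq_sum_sum_det_colorMatrix (M : κ → Matrix ι ι R) :
    (∑ a, M a).det = ∑ c : ι → κ, ∑ d : ι → κ, (colorMatrix M c d).det := by
  rw [det_sum_eq_sum_det_row_choice]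
  refine sum_congr rfl fun c _ => ?_
  have hsplit : (of fun i j => M (c i) i j) =
      ∑ b, of fun i j => if c i = b then M (c i) i j else 0 := by
    ext i j
    simp [sum_apply]
  rw [hsplit, det_sum_eq_sum_det_col_choice]
  rfl

omit [DecidableEq ι] [Fintype κ] in
theorem card_fiber_eq_of_comp_perm {c d : ι → κ} (σ : Equiv.Perm ι) (hσ : ∀ j, c (σ j) = d j)
    (a : κ) : #{i | c i = a} = #{i | d i = a} :=
  card_equiv σ.symm fun i => by simp [← hσ]

omit [Fintype κ] in
theorem Matrix.det_colorMatrix_eq_zero (M : κ → Matrix ι ι R) {c d : ι → κ}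
    (h : ¬ ∀ a, #{i | c i = a} = #{i | d i = a}) : (colorMatrix M c d).det = 0 := by
  rw [det_apply']
  refine sum_eq_zero fun σ _ => ?_
  obtain ⟨j, hj⟩ : ∃ j, c (σ j) ≠ d j := by
    by_contra! hσ
    exact h (card_fiber_eq_of_comp_perm σ hσ)
  rw [prod_eq_zero (mem_univ j) (by simp [colorMatrix, hj]), mul_zero]

theorem Matrix.det_colorMatrix_eq_sign_mul_prod [LinearOrder κ] (M : κ → Matrix ι ι R)
    {c d : ι → κ} (ρ : Equiv.Perm ι) (hρ : ∀ i, d (ρ i) = c i) :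
    (colorMatrix M c d).det =
      Equiv.Perm.sign ρ * ∏ a, (of fun i j : {x // c x = a} => M a i (ρ j)).det := by
  have hblock : ((colorMatrix M c d).submatrix id ρ).BlockTriangular c := by
    intro i j hij
    simp [colorMatrix, hρ, hij.ne']
  have hblocks : ∀ a, ((colorMatrix M c d).submatrix id ρ).toSquareBlock c a =
      of fun i j : {x // c x = a} => M a i (ρ j) := by
    intro a
    ext i j
    simp [toSquareBlock_def, colorMatrix, hρ, i.2, j.2]
  have hperm := det_permute' ρ (colorMatrix M c d)
  simp only [hblock.det_fintype, hblocks] at hperm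
  rw [hperm, ← mul_assoc, ← Int.cast_mul, ← Units.val_mul, Int.units_mul_self]
  simp

end

section
variable {ι κ : Type*} [Fintype ι] [LinearOrder ι] [DecidableEq κ]

def orderedFiberEquiv (c : ι → κ) (m : κ → ℕ) (h : ∀ a, #{i | c i = a} = m a) :
    (Σ a, Fin (m a)) ≃ ι :=
  (Equiv.sigmaCongrRight fun a => ({i | c i = a} : Finset ι).orderIsoOfFin (h a) |>.toEquiv.trans
    (Equiv.subtypeEquivRight fun _ => by simp)).trans (Equiv.sigmaFiberEquiv c)

variable {c d : ι → κ}

theorem orderedFiberEquiv_mk {m : κ → ℕ} (h : ∀ a, #{i | c i = a} = m a) (a : κ) (t : Fin (m a)) :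
    orderedFiberEquiv c m h ⟨a, t⟩ = ({i | c i = a} : Finset ι).orderEmbOfFin (h a) t :=
  rfl

theorem apply_orderedFiberEquiv {m : κ → ℕ} (h : ∀ a, #{i | c i = a} = m a)
    (x : Σ a, Fin (m a)) : c (orderedFiberEquiv c m h x) = x.1 :=
  (mem_filter.1 (orderEmbOfFin_mem _ (h x.1) x.2)).2

def fiberMatching (h : ∀ a, #{i | c i = a} = #{i | d i = a}) : Equiv.Perm ι :=
  (orderedFiberEquiv c _ fun _ => rfl).symm.trans (orderedFiberEquiv d _ fun a => (h a).symm)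

variable (h : ∀ a, #{i | c i = a} = #{i | d i = a})

theorem fiberMatching_orderEmbOfFin (a : κ) (t : Fin #{i | c i = a}) :
    fiberMatching h (({i | c i = a} : Finset ι).orderEmbOfFin rfl t) =
      ({i | d i = a} : Finset ι).orderEmbOfFin (h a).symm t := by
  rw [← orderedFiberEquiv_mk (fun _ => rfl), fiberMatching, Equiv.trans_apply,
    Equiv.symm_apply_apply, orderedFiberEquiv_mk]

theorem apply_fiberMatching (i : ι) : d (fiberMatching h i) = c i :=
  apply_orderedFiberEquiv (fun a => (h a).symm) _

theorem fiberMatching_le_fiberMatching {i j : ι} (hc : c i = c j) (hij : i ≤ j) :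
    fiberMatching h i ≤ fiberMatching h j := by
  obtain ⟨a, ha⟩ : ∃ a, c i = a := ⟨_, rfl⟩
  have hrange : Set.range (({x | c x = a} : Finset ι).orderEmbOfFin rfl) = {x | c x = a} := by
    simp [range_orderEmbOfFin]
  obtain ⟨r, rfl⟩ : i ∈ Set.range (({x | c x = a} : Finset ι).orderEmbOfFin rfl) := by
    simp [hrange, ha]
  obtain ⟨t, rfl⟩ : j ∈ Set.range (({x | c x = a} : Finset ι).orderEmbOfFin rfl) := by
    simp [hrange, ← hc, ha]
  rw [fiberMatching_orderEmbOfFin, fiberMatching_orderEmbOfFin]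
  simpa using hij

theorem det_of_orderEmbOfFin_eq_det_of_fiberMatching {R : Type*} [CommRing R]
    (N : Matrix ι ι R) (a : κ) :
    (of fun r t : Fin #{i | c i = a} =>
      N (({i | c i = a} : Finset ι).orderEmbOfFin rfl r)
        (({i | d i = a} : Finset ι).orderEmbOfFin (h a).symm t)).det =
      (of fun i j : {x // c x = a} => N i (fiberMatching h j)).det := by
  let e : Fin #{i | c i = a} ≃ {x // c x = a} :=
    (({i | c i = a} : Finset ι).orderIsoOfFin rfl).toEquiv.trans
      (Equiv.subtypeEquivRight fun _ => by simp)
  rw [← det_submatrix_equiv_self e]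
  congr 1
  ext r t
  simp [e, fiberMatching_orderEmbOfFin]

end

open Finset in
theorem det_sum_minor_expansion_general {R : Type*} [CommRing R] (n k : ℕ)
    (M : Fin k → Matrix (Fin n) (Fin n) R)
    (e : (Fin n → Fin k) → (Fin n → Fin k) → ℤ)
    (he : ∀ c d : Fin n → Fin k,
      (∀ a, (univ.filter fun i => c i = a).card = (univ.filter fun i => d i = a).card) →
      ∀ σ : Equiv.Perm (Fin n),
        (∀ i, d (σ i) = c i) →
        (∀ i j, c i = c j → i ≤ j → σ i ≤ σ j) →
        e c d = (Equiv.Perm.sign σ : ℤ)) :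
    Matrix.det (∑ a, M a) =
      ∑ c : Fin n → Fin k, ∑ d : Fin n → Fin k,
        if h : ∀ a, (univ.filter fun i => c i = a).card = (univ.filter fun i => d i = a).card
        then (e c d : R) *
          ∏ a : Fin k,
            Matrix.det (Matrix.of
              fun (r t : Fin ((univ.filter fun i => c i = a).card)) =>
                M a ((univ.filter fun i => c i = a).orderEmbOfFin rfl r)
                    ((univ.filter fun i => d i = a).orderEmbOfFin (h a).symm t))
        else 0 := by
  rw [det_sum_eq_sum_sum_det_colorMatrix]
  refine sum_congr rfl fun c _ => sum_congr rfl fun d _ => ?_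
  split_ifs with h
  · rw [det_colorMatrix_eq_sign_mul_prod M (fiberMatching h) (apply_fiberMatching h),
      he c d h _ (apply_fiberMatching h) fun _ _ => fiberMatching_le_fiberMatching h]
    exact congrArg _ <| prod_congr rfl fun a _ =>
      (det_of_orderEmbOfFin_eq_det_of_fiberMatching h (M a) a).symm
  · exact det_colorMatrix_eq_zero M h

open Finset in
/-- Minor expansion of a determinant of a sum of matrices.
Colorings `c d : Fin n → Fin k` encode the ordered partitions `𝓘 = (c⁻¹ 1, …, c⁻¹ k)` and
`𝓙 = (d⁻¹ 1, …, d⁻¹ k)` of `{1,…,n}`; they are compatible when corresponding blocks have equal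
cardinalities.  The function `e` is assumed to give, on each compatible pair, the sign of the
unique permutation `σ` mapping each block of `𝓘` onto the corresponding block of `𝓙`
monotonically (i.e. `r`-th smallest to `r`-th smallest). -/
theorem det_sum_minor_expansion {R : Type*} [CommRing R] (n k : ℕ) (hn : 1 ≤ n) (hk : 1 ≤ k)
    (M : Fin k → Matrix (Fin n) (Fin n) R)
    (e : (Fin n → Fin k) → (Fin n → Fin k) → ℤ)
    (he : ∀ c d : Fin n → Fin k,
      (∀ a, (univ.filter fun i => c i = a).card = (univ.filter fun i => d i = a).card) →
      ∀ σ : Equiv.Perm (Fin n),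
        (∀ i, d (σ i) = c i) →
        (∀ i j, c i = c j → i ≤ j → σ i ≤ σ j) →
        e c d = (Equiv.Perm.sign σ : ℤ)) :
    Matrix.det (∑ a, M a) =
      ∑ c : Fin n → Fin k, ∑ d : Fin n → Fin k,
        if h : ∀ a, (univ.filter fun i => c i = a).card = (univ.filter fun i => d i = a).card
        then (e c d : R) *
          ∏ a : Fin k,
            Matrix.det (Matrix.of
              fun (r t : Fin ((univ.filter fun i => c i = a).card)) =>
                M a ((univ.filter fun i => c i = a).orderEmbOfFin rfl r)
                    ((univ.filter fun i => d i = a).orderEmbOfFin (h a).symm t))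
        else 0 :=
  det_sum_minor_expansion_general n k M e he
end

section
/- Let m ≥ n ≥ k ≥ 0 be integers, let f_1,…,f_m be univariate polynomials over ℂ, and define the Slater determinant P(x_1,…,x_m) = det( f_j(x_i) )_{1≤i,j≤m}. Work in the polynomial ring S = ℂ[z_1,…,z_m, y_1,…,y_n, (u_i^a)_{1≤i≤n,1≤a≤k}, (v_j^a)_{1≤j≤n,1≤a≤k}] in all indicated indeterminates. Then the polynomial P(z_1,…,z_m)^{n−k} divides, in S, the determinant det( Σ_{a=1}^k u_i^a v_j^a · P(z_1,…,ẑ_i,…,z_m, y_j) )_{1≤i,j≤n}, where P(z_1,…,ẑ_i,…,z_m, y_j) means P evaluated with the variable z_i removed from the list (z_1,…,z_m) and y_j appended as the last argument. -/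
/-- The variables: `z_1,…,z_m`, `y_1,…,y_n`, `u_i^a`, `v_j^a`. -/
abbrev SlaterVars (m n k : ℕ) := (Fin m ⊕ Fin n) ⊕ ((Fin n × Fin k) ⊕ (Fin n × Fin k))

/-- The Slater determinant `P(x_1,…,x_m) = det (f_j (x_i))`, evaluated on arguments in the
polynomial ring `ℂ[z, y, u, v]`. -/
noncomputable def slaterP (m n k : ℕ) (f : Fin m → Polynomial ℂ)
    (x : Fin m → MvPolynomial (SlaterVars m n k) ℂ) :
    MvPolynomial (SlaterVars m n k) ℂ :=
  Matrix.det (Matrix.of fun i j : Fin m => Polynomial.aeval (x i) (f j))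

/-!
Put `W = (f_c(z_r))`, so that `P(z) = det W`. Expanding `P(z_1,…,ẑ_i,…,z_m,y_j)` along its last
row gives `±∑_c adj(W)_{c,i} f_c(y_j)`, so up to row signs the matrix is
`(∑_a u_i^a v_j^a (C F)_{ij})` with `C_{ic} = adj(W)_{c,i}`. By Jacobi's theorem on minors of the
adjugate, every `r × r` minor of `C` with distinct rows is divisible by `(det W)^(r-1)`.
Expanding the determinant along its rows picks an index `a(i)` for each row, and the resulting
matrix factors through `k` blocks of columns, row `i` of `C` going to block `a(i)`; by
Cauchy–Binet its determinant is a combination of products of minors of `C`, one for each nonempty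
fibre of `a`, whose exponents add up to at least `n - k`. If `det W = 0`, every Slater determinant
involved vanishes, all being specialisations of one generic polynomial.
-/

open Finset Matrix MvPolynomial

universe u

namespace Matrix

variable {R : Type*} [CommRing R]

theorem det_eq_neg_one_pow_mul_sum_mul_adjugate {p : ℕ}
    (A M : Matrix (Fin (p + 1)) (Fin (p + 1)) R) (i : Fin (p + 1))
    (hM : ∀ r, M r.castSucc = A (i.succAbove r)) :
    M.det = (-1) ^ (p + (i : ℕ)) * ∑ c, M (Fin.last p) c * A.adjugate c i := by
  rw [det_succ_row _ (Fin.last p), mul_sum]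
  refine sum_congr rfl fun c _ => ?_
  have hminor : M.submatrix (Fin.last p).succAbove c.succAbove =
      A.submatrix i.succAbove c.succAbove := by
    ext r t
    simp [hM]
  rw [hminor, adjugate_fin_succ_eq_det_submatrix, Fin.val_last]
  have hsign : (-1 : R) ^ (p + (c : ℕ)) = (-1) ^ (p + (i : ℕ)) * (-1) ^ ((i : ℕ) + c) := by
    rw [← pow_add, show p + (i : ℕ) + (i + c) = p + c + 2 * i by ring, pow_add _ (p + c),
      pow_mul, neg_one_sq, one_pow, mul_one]
  rw [hsign]
  ring

theorem det_of_sum_mul_eq_sum_prod_mul_det {η κ : Type*} [Fintype η] [DecidableEq η]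
    [Fintype κ] (u : η → κ → R) (G : κ → Matrix η η R) :
    (of fun i j => ∑ b, u i b * G b i j).det =
      ∑ a : η → κ, (∏ i, u i (a i)) * (of fun i j => G (a i) i j).det := by
  have := (detRowAlternating (n := η) (R := R)).map_sum fun i b => u i b • G b i
  convert this using 1
  · congr 1; ext i j; simp
  · refine sum_congr rfl fun a _ => ?_
    rw [← det_mul_column]; rfl

theorem det_mul_eq_sum_prod_mul_det_submatrix {η γ : Type*} [Fintype η] [DecidableEq η]
    [Fintype γ] (A : Matrix η γ R) (B : Matrix γ η R) :
    (A * B).det = ∑ l : η → γ, (∏ j, B (l j) j) * (A.submatrix id l).det := by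
  rw [← det_transpose, transpose_mul]
  convert det_of_sum_mul_eq_sum_prod_mul_det (fun j c => B c j) (fun c _ i => A i c) using 3 with l
  · ext j i
    simp [mul_apply, mul_comm]
  · rw [← det_transpose]; rfl

theorem dvd_det_mul_of_dvd_det_submatrix {η γ : Type*} [Fintype η] [DecidableEq η]
    [Fintype γ] (A : Matrix η γ R) (B : Matrix γ η R) {d : R}
    (hA : ∀ l : η → γ, d ∣ (A.submatrix id l).det) : d ∣ (A * B).det := by
  rw [det_mul_eq_sum_prod_mul_det_submatrix]
  exact dvd_sum fun l _ => (hA l).mul_left _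

theorem det_pow_dvd_det_submatrix_adjugate [IsDomain R] {ι ρ : Type*} [Fintype ι]
    [DecidableEq ι] [Fintype ρ] [DecidableEq ρ] (A : Matrix ι ι R) (hA : A.det ≠ 0)
    {e : ρ → ι} (he : Function.Injective e) (g : ρ → ι) :
    A.det ^ (Fintype.card ρ - 1) ∣ (A.adjugate.submatrix e g).det := by
  let E : ρ ⊕ ↥(Set.range e)ᶜ ≃ ι :=
    ((Equiv.ofInjective e he).sumCongr (Equiv.refl _)).trans (Equiv.Set.sumCompl _)
  let M : Matrix (ρ ⊕ ↥(Set.range e)ᶜ) (ρ ⊕ ↥(Set.range e)ᶜ) R :=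
    fromBlocks (A.adjugate.submatrix e g) 0 (A.adjugate.submatrix (E ∘ Sum.inr) g) 1
  let N : Matrix (ρ ⊕ ↥(Set.range e)ᶜ) (ρ ⊕ ↥(Set.range e)ᶜ) R :=
    of fun x y =>
      Sum.elim (fun t => if E x = g t then 1 else 0) (fun p => A (E x) (E (Sum.inr p))) y
  -- `A * adj A = det A • 1` turns the `ρ`-columns of `M` into `det A` times unit columns.
  have hprod : A.submatrix E E * M =
      of fun x y => Sum.elim (fun _ => A.det) (fun _ => 1) y * N x y := by
    ext x (t | p)
    · have hM : ∀ z, M z (Sum.inl t) = A.adjugate (E z) (g t) := by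
        rintro (s | p) <;> rfl
      simp only [mul_apply, submatrix_apply, hM,
        Equiv.sum_comp E fun z => A (E x) z * A.adjugate z (g t)]
      simp [← mul_apply, mul_adjugate, one_apply, N]
    · have hM : ∀ z, M z (Sum.inr p) = if z = Sum.inr p then 1 else 0 := by
        rintro (s | q) <;> simp [M, one_apply]
      simp [mul_apply, hM, N]
  have hdet : A.det * (A.adjugate.submatrix e g).det = A.det ^ Fintype.card ρ * N.det := by
    have := congrArg det hprod
    rw [det_mul, det_submatrix_equiv_self, det_fromBlocks_zero₁₂, det_one, mul_one,
      det_mul_row, Fintype.prod_sum_type] at this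
    simpa using this
  obtain h0 | hpos := (Fintype.card ρ).eq_zero_or_pos
  · simp [h0]
  · refine ⟨N.det, mul_left_cancel₀ hA ?_⟩
    rw [hdet, ← mul_assoc, ← pow_succ', Nat.sub_add_cancel hpos]

def rowsInBlocks {η κ ι : Type*} [DecidableEq κ] (a : η → κ) (C : Matrix η ι R) :
    Matrix η (κ × ι) R :=
  of fun i p => if a i = p.1 then C i p.2 else 0

/-- The minor vanishes unless the block labels of the chosen columns are a permutation of those
of the rows; after that permutation it is block diagonal, with one minor of `C` for each nonempty
fibre of `a`. -/
theorem pow_dvd_det_rowsInBlocks_submatrix {η : Type u} {κ ι : Type*} [Fintype η]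
    [DecidableEq η] [Fintype κ] [LinearOrder κ] {d : R} {C : Matrix η ι R}
    (hC : ∀ (ρ : Type u) [Fintype ρ] [DecidableEq ρ] (e : ρ → η) (g : ρ → ι),
      Function.Injective e → d ^ (Fintype.card ρ - 1) ∣ (C.submatrix e g).det)
    (a : η → κ) (l : η → κ × ι) :
    d ^ (Fintype.card η - Fintype.card κ) ∣ ((rowsInBlocks a C).submatrix id l).det := by
  set M := (rowsInBlocks a C).submatrix id l
  by_cases hτ : ∃ τ : Equiv.Perm η, ∀ i, (l (τ i)).1 = a i
  · obtain ⟨τ, hτ⟩ := hτ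
    have hbt : (M.submatrix id τ).BlockTriangular a := fun i j hij => by
      simp [M, rowsInBlocks, hτ, hij.ne']
    have hblock : ∀ b, (M.submatrix id τ).toSquareBlock a b =
        C.submatrix Subtype.val fun j : {i // a i = b} => (l (τ j)).2 := fun b => by
      ext i j
      simp [toSquareBlock_def, M, rowsInBlocks, hτ, i.2, j.2]
    have hcard : Fintype.card η ≤
        ∑ b ∈ univ.image a, (Fintype.card {i // a i = b} - 1) + Fintype.card κ :=
      calc Fintype.card η = ∑ b ∈ univ.image a, Fintype.card {i // a i = b} := by
            simp only [Fintype.card_subtype]; exact card_eq_sum_card_image a univ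
        _ ≤ ∑ b ∈ univ.image a, ((Fintype.card {i // a i = b} - 1) + 1) :=
            sum_le_sum fun _ _ => le_tsub_add
        _ ≤ _ := by
            rw [sum_add_distrib, sum_const, smul_eq_mul, mul_one]
            exact Nat.add_le_add_left (card_le_univ _) _
    have hdvd : d ^ (∑ b ∈ univ.image a, (Fintype.card {i // a i = b} - 1)) ∣
        (M.submatrix id τ).det := by
      rw [hbt.det, ← prod_pow_eq_pow_sum]
      refine prod_dvd_prod_of_dvd _ _ fun b _ => ?_
      rw [hblock]
      exact hC _ _ _ Subtype.val_injective
    have hsign : IsUnit (Equiv.Perm.sign τ : R) :=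
      (Equiv.Perm.sign τ).isUnit.map (Int.castRingHom R)
    rw [det_permute', hsign.dvd_mul_left] at hdvd
    exact (pow_dvd_pow d (by omega)).trans hdvd
  · push Not at hτ
    suffices M.det = 0 by simp [this]
    refine det_apply M ▸ sum_eq_zero fun σ _ => ?_
    obtain ⟨i, hi⟩ := hτ σ.symm
    rw [prod_eq_zero (mem_univ (σ.symm i)) (by simp [M, rowsInBlocks, Ne.symm hi]), smul_zero]

theorem pow_dvd_det_sum_mul_mul_mul {η : Type u} {κ ι : Type*} [Fintype η] [DecidableEq η]
    [Fintype κ] [LinearOrder κ] [Fintype ι] {d : R} {C : Matrix η ι R}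
    (hC : ∀ (ρ : Type u) [Fintype ρ] [DecidableEq ρ] (e : ρ → η) (g : ρ → ι),
      Function.Injective e → d ^ (Fintype.card ρ - 1) ∣ (C.submatrix e g).det)
    (F : Matrix ι η R) (u v : η → κ → R) :
    d ^ (Fintype.card η - Fintype.card κ) ∣
      (of fun i j => ∑ b, u i b * v j b * (C * F) i j).det := by
  simp_rw [mul_assoc]
  rw [det_of_sum_mul_eq_sum_prod_mul_det u fun b i j => v j b * (C * F) i j]
  refine dvd_sum fun a _ => Dvd.dvd.mul_left ?_ _
  let B : Matrix (κ × ι) η R := of fun p j => v j p.1 * F p.2 j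
  have hfactor : (of fun i j => v j (a i) * (C * F) i j) = rowsInBlocks a C * B := by
    ext i j
    simp [B, rowsInBlocks, mul_apply, Fintype.sum_prod_type, mul_sum, mul_left_comm]
  rw [hfactor]
  exact dvd_det_mul_of_dvd_det_submatrix _ _ (pow_dvd_det_rowsInBlocks_submatrix hC a)

theorem det_pow_dvd_det_sum_mul_mul_adjugate [IsDomain R] {η : Type u} {κ ι : Type*}
    [Fintype η] [DecidableEq η] [Fintype κ] [LinearOrder κ] [Fintype ι] [DecidableEq ι]
    (A : Matrix ι ι R) (hA : A.det ≠ 0) {h : η → ι} (hh : Function.Injective h)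
    (F : Matrix ι η R) (u v : η → κ → R) :
    A.det ^ (Fintype.card η - Fintype.card κ) ∣
      (of fun i j => ∑ b, u i b * v j b * ∑ c, A.adjugate c (h i) * F c j).det := by
  have hC : ∀ (ρ : Type u) [Fintype ρ] [DecidableEq ρ] (e : ρ → η) (g : ρ → ι),
      Function.Injective e →
        A.det ^ (Fintype.card ρ - 1) ∣ ((Aᵀ.adjugate.submatrix h id).submatrix e g).det := by
    intro ρ _ _ e g he
    rw [submatrix_submatrix, ← det_transpose A]
    exact det_pow_dvd_det_submatrix_adjugate _ (by rwa [det_transpose]) (hh.comp he) g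
  simpa [mul_apply, ← adjugate_transpose] using pow_dvd_det_sum_mul_mul_mul hC F u v

theorem zero_pow_dvd_det_zero {η : Type*} [Fintype η] [DecidableEq η] {j : ℕ}
    (hj : j ≤ Fintype.card η) : (0 : R) ^ j ∣ (0 : Matrix η η R).det := by
  rw [← zero_smul R (1 : Matrix η η R), det_smul, det_one, mul_one]
  exact pow_dvd_pow 0 hj

end Matrix

noncomputable def slaterMatrix (m n k : ℕ) (f : Fin m → Polynomial ℂ) :
    Matrix (Fin m) (Fin m) (MvPolynomial (SlaterVars m n k) ℂ) :=
  of fun r c => Polynomial.aeval (X (Sum.inl (Sum.inl r))) (f c)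

theorem slaterP_X_eq_det_slaterMatrix (m n k : ℕ) (f : Fin m → Polynomial ℂ) :
    slaterP m n k f (fun r => X (Sum.inl (Sum.inl r))) = (slaterMatrix m n k f).det :=
  rfl

theorem slaterP_eq_aeval_det (m n k : ℕ) (f : Fin m → Polynomial ℂ)
    (x : Fin m → MvPolynomial (SlaterVars m n k) ℂ) :
    slaterP m n k f x =
      aeval x (Matrix.of fun i j : Fin m =>
        Polynomial.aeval (X i : MvPolynomial (Fin m) ℂ) (f j)).det := by
  rw [slaterP, AlgHom.map_det]
  congr 1
  ext i j
  simp [← Polynomial.aeval_algHom_apply]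

theorem slaterP_eq_zero_of_det_slaterMatrix_eq_zero {m n k : ℕ} {f : Fin m → Polynomial ℂ}
    (h : (slaterMatrix m n k f).det = 0) (x : Fin m → MvPolynomial (SlaterVars m n k) ℂ) :
    slaterP m n k f x = 0 := by
  have hrename : (aeval fun r => X (Sum.inl (Sum.inl r)) :
      MvPolynomial (Fin m) ℂ →ₐ[ℂ] MvPolynomial (SlaterVars m n k) ℂ) =
      rename fun r => Sum.inl (Sum.inl r) := by
    ext r; simp
  rw [← slaterP_X_eq_det_slaterMatrix, slaterP_eq_aeval_det, hrename, ← map_zero (rename _)]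
    at h
  rw [slaterP_eq_aeval_det, rename_injective _ (Sum.inl_injective.comp Sum.inl_injective) h,
    map_zero]

theorem slaterP_snoc_removeNth {m' n k : ℕ} (hnm : n ≤ m' + 1)
    (f : Fin (m' + 1) → Polynomial ℂ) (i j : Fin n) :
    slaterP (m' + 1) n k f (fun r =>
      if hr : (r : ℕ) < m' + 1 - 1 then
        (if (r : ℕ) < (i : ℕ) then
          X (Sum.inl (Sum.inl (⟨(r : ℕ), by have := r.isLt; omega⟩ : Fin (m' + 1))))
        else
          X (Sum.inl (Sum.inl (⟨(r : ℕ) + 1, by omega⟩ : Fin (m' + 1)))))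
      else X (Sum.inl (Sum.inr j))) =
    (-1) ^ (m' + (i : ℕ)) * ∑ c, (slaterMatrix (m' + 1) n k f).adjugate c (Fin.castLE hnm i) *
      Polynomial.aeval (X (Sum.inl (Sum.inr j))) (f c) := by
  rw [slaterP, det_eq_neg_one_pow_mul_sum_mul_adjugate (slaterMatrix (m' + 1) n k f) _
    (Fin.castLE hnm i) fun r => ?_]
  · simp only [of_apply, Fin.val_last, dif_neg (lt_irrefl m'), Nat.add_sub_cancel,
      Fin.val_castLE, mul_comm (Polynomial.aeval _ _)]
  · funext c
    simp only [slaterMatrix, of_apply, Fin.val_castSucc,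
      dif_pos (show (r : ℕ) < m' + 1 - 1 by omega)]
    rcases lt_or_ge (r : ℕ) i with h | h
    · simp [h, Fin.succAbove_of_castSucc_lt, Fin.lt_def]
      rfl
    · simp [Nat.not_lt.mpr h, Fin.succAbove_of_le_castSucc, Fin.le_def, h]
      rfl

open MvPolynomial in
/-- `P(z)^(n-k)` divides `det ( ∑_a u_i^a v_j^a P(z_1,…,ẑ_i,…,z_m, y_j) )` in
`ℂ[z_1,…,z_m, y_1,…,y_n, (u_i^a), (v_j^a)]`. -/
theorem slater_det_divisibility (m n k : ℕ) (hnm : n ≤ m)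
    (f : Fin m → Polynomial ℂ) :
    slaterP m n k f (fun r => X (Sum.inl (Sum.inl r))) ^ (n - k) ∣
    Matrix.det (Matrix.of fun i j : Fin n =>
      ∑ a : Fin k,
        X (Sum.inr (Sum.inl (i, a))) * X (Sum.inr (Sum.inr (j, a))) *
        slaterP m n k f (fun r =>
          if hr : (r : ℕ) < m - 1 then
            (if (r : ℕ) < (i : ℕ) then
              X (Sum.inl (Sum.inl (⟨(r : ℕ), by have := r.isLt; omega⟩ : Fin m)))
            else
              X (Sum.inl (Sum.inl (⟨(r : ℕ) + 1, by omega⟩ : Fin m))))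
          else X (Sum.inl (Sum.inr j)))) := by
  obtain _ | m' := m
  · obtain rfl : n = 0 := by omega
    simp
  rw [slaterP_X_eq_det_slaterMatrix]
  set W := slaterMatrix (m' + 1) n k f
  by_cases hW : W.det = 0
  · simp only [slaterP_eq_zero_of_det_slaterMatrix_eq_zero hW, mul_zero, sum_const_zero, hW]
    exact zero_pow_dvd_det_zero (by simp)
  have key := (det_pow_dvd_det_sum_mul_mul_adjugate W hW (Fin.castLE_injective hnm)
    (of fun c j => Polynomial.aeval (X (Sum.inl (Sum.inr j))) (f c))
    (fun i a => X (Sum.inr (Sum.inl (i, a)))) fun j a => X (Sum.inr (Sum.inr (j, a)))).mul_left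
    (∏ i : Fin n, (-1) ^ (m' + (i : ℕ)))
  rw [← det_mul_column, Fintype.card_fin, Fintype.card_fin] at key
  convert key using 5 with i j
  simp only [W, slaterP_snoc_removeNth hnm, of_apply]
  conv_rhs => rw [mul_sum]
  exact sum_congr rfl fun _ _ => by ring
end

section
/- Let n ≥ 2 and 0 ≤ ℓ' ≤ ℓ be integers and set q = exp(2πi/(ℓ+2)). For any three distinct integers g, h, k in {0,1,…,ℓ+1}, the polynomial identity s_{λ_{n,ℓ,ℓ'}}(z_1,…,z_{2n−3}, q^g w, q^h w, q^k w) = 0 holds in ℂ[z_1,…,z_{2n−3}, w]; i.e., the 2-staircase Schur polynomial vanishes identically whenever three of its 2n arguments are specialized to q^g w, q^h w, q^k w. (Since s_{λ_{n,ℓ,ℓ'}} is symmetric, the three specialized arguments may be placed in any three distinct positions.) -/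
/-- The shifted Vandermonde determinant `Δ_λ(v) = det (v_i ^ (λ_j + N - j))`
(indices `j` one-based, so the exponent is `λ j + (N - 1 - j)` for zero-based `j`). -/
def shiftedVdm {R : Type*} [CommRing R] {N : ℕ} (lam : Fin N → ℕ) (v : Fin N → R) : R :=
  Matrix.det (Matrix.of fun i j : Fin N => v i ^ (lam j + (N - 1 - (j : ℕ))))

/-- The Vandermonde product `Δ(v) = ∏_{i<j} (v i - v j)`. -/
def vdmProd {R : Type*} [CommRing R] {N : ℕ} (v : Fin N → R) : R :=
  ∏ i : Fin N, ∏ j ∈ Finset.Ioi i, (v i - v j)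

/-- The 2-staircase partition `λ_{n,ℓ,ℓ'}` of length `2n`:
its `(2j-1)`-th part is `(n-j)ℓ + ℓ'` and its `(2j)`-th part is `(n-j)ℓ` (1-based). -/
def twoStaircase (n ℓ ℓ' : ℕ) : Fin (2 * n) → ℕ := fun t =>
  if (t : ℕ) % 2 = 0 then (n - 1 - (t : ℕ) / 2) * ℓ + ℓ'
  else (n - ((t : ℕ) + 1) / 2) * ℓ

/-- The staircase partition `μ_{N,h} = ((N-1)h, (N-2)h, …, h, 0)`. -/
def staircasePart (N h : ℕ) : Fin N → ℕ := fun t => (N - 1 - (t : ℕ)) * h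

/-- `exp(2πi/d)`. -/
noncomputable def qRoot (d : ℕ) : ℂ := Complex.exp (2 * Real.pi * Complex.I / (d : ℂ))

/-! Every exponent `λ_j + 2n - j` of the alternant `Δ_λ` is congruent to `0` or `ℓ' + 1` modulo
`ℓ + 2`. Hence, for `x^(ℓ+2) = 1`, the row of `Δ_λ` at an argument `x w` has the form
`u + x^(ℓ'+1) v` with row vectors `u, v` that do not depend on `x`. Three rows of this form are
linearly dependent, so `Δ_λ` vanishes under the specialisation, whereas `Δ` does not, because the
specialised arguments stay pairwise distinct. -/

open MvPolynomial

theorem Matrix.det_eq_zero_of_rows_eq_add_smul {R ι : Type*} [CommRing R] [NoZeroDivisors R]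
    [Fintype ι] [DecidableEq ι] (M : Matrix ι ι R) {i₁ i₂ i₃ : ι}
    (h₁₂ : i₁ ≠ i₂) (h₁₃ : i₁ ≠ i₃) (h₂₃ : i₂ ≠ i₃) (u v : ι → R) {b₁ b₂ b₃ : R}
    (hM₁ : M i₁ = u + b₁ • v) (hM₂ : M i₂ = u + b₂ • v) (hM₃ : M i₃ = u + b₃ • v) :
    M.det = 0 := by
  by_cases hb : b₁ = b₂
  · exact det_zero_of_row_eq h₁₂ (by rw [hM₁, hM₂, hb])
  have hrel : (b₂ - b₁) • M i₃ = (b₂ - b₃) • M i₁ + (b₃ - b₁) • M i₂ := by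
    rw [hM₁, hM₂, hM₃]; module
  have hdet : (b₂ - b₁) * M.det = 0 :=
    calc (b₂ - b₁) * M.det = (M.updateRow i₃ ((b₂ - b₁) • M i₃)).det := by
          rw [det_updateRow_smul, updateRow_eq_self]
      _ = 0 := by
          rw [hrel, det_updateRow_add, det_updateRow_smul, det_updateRow_smul,
            det_updateRow_eq_zero h₁₃, det_updateRow_eq_zero h₂₃, mul_zero, mul_zero, add_zero]
  exact (mul_eq_zero.mp hdet).resolve_left (sub_ne_zero.mpr (Ne.symm hb))

theorem mul_pow_eq_ite_add_smul_of_pow_eq_one {R ι : Type*} [CommRing R] (E : ι → ℕ) {d s : ℕ}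
    (hE : ∀ j, E j ≡ 0 [MOD d] ∨ E j ≡ s [MOD d]) {x : R} (hx : x ^ d = 1) (w : R) :
    (fun j => (x * w) ^ E j) = (fun j => if E j ≡ 0 [MOD d] then w ^ E j else 0)
      + x ^ s • (fun j => if E j ≡ 0 [MOD d] then 0 else w ^ E j) := by
  funext j
  by_cases h0 : E j ≡ 0 [MOD d]
  · simp [h0, mul_pow, pow_eq_pow_of_modEq h0 hx]
  · simp [h0, mul_pow, pow_eq_pow_of_modEq ((hE j).resolve_left h0) hx]

theorem shiftedVdm_eq_zero_of_modEq {R : Type*} [CommRing R] [NoZeroDivisors R] {N d s : ℕ}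
    (lam : Fin N → ℕ)
    (hlam : ∀ j : Fin N, lam j + (N - 1 - j) ≡ 0 [MOD d] ∨ lam j + (N - 1 - j) ≡ s [MOD d])
    (v : Fin N → R) {i₁ i₂ i₃ : Fin N} (h₁₂ : i₁ ≠ i₂) (h₁₃ : i₁ ≠ i₃) (h₂₃ : i₂ ≠ i₃)
    {w x₁ x₂ x₃ : R} (hx₁ : x₁ ^ d = 1) (hx₂ : x₂ ^ d = 1) (hx₃ : x₃ ^ d = 1)
    (hv₁ : v i₁ = x₁ * w) (hv₂ : v i₂ = x₂ * w) (hv₃ : v i₃ = x₃ * w) :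
    shiftedVdm lam v = 0 := by
  have hrow (i : Fin N) (x : R) (hx : x ^ d = 1) (hv : v i = x * w) :=
    hv ▸ mul_pow_eq_ite_add_smul_of_pow_eq_one _ hlam hx w
  exact Matrix.det_eq_zero_of_rows_eq_add_smul _ h₁₂ h₁₃ h₂₃ _ _
    (hrow i₁ x₁ hx₁ hv₁) (hrow i₂ x₂ hx₂ hv₂) (hrow i₃ x₃ hx₃ hv₃)

theorem twoStaircase_add_modEq (n ℓ ℓ' : ℕ) (j : Fin (2 * n)) :
    twoStaircase n ℓ ℓ' j + (2 * n - 1 - j) ≡ 0 [MOD ℓ + 2] ∨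
      twoStaircase n ℓ ℓ' j + (2 * n - 1 - j) ≡ ℓ' + 1 [MOD ℓ + 2] := by
  obtain ⟨t, ht⟩ := j
  simp only [twoStaircase]
  rcases Nat.even_or_odd' t with ⟨a, rfl | rfl⟩
  · right
    have hexp : (n - 1 - 2 * a / 2) * ℓ + ℓ' + (2 * n - 1 - 2 * a)
        = (ℓ' + 1) + (ℓ + 2) * (n - 1 - a) := by
      rw [Nat.mul_div_cancel_left a two_pos, show 2 * n - 1 - 2 * a = 2 * (n - 1 - a) + 1 by omega]
      ring
    simp only [Nat.mul_mod_right, if_true, hexp]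
    exact Nat.add_mul_mod_self_left _ _ _
  · left
    have hexp : (n - (2 * a + 1 + 1) / 2) * ℓ + (2 * n - 1 - (2 * a + 1))
        = (ℓ + 2) * (n - 1 - a) := by
      rw [show (2 * a + 1 + 1) / 2 = a + 1 by omega, show n - (a + 1) = n - 1 - a by omega,
        show 2 * n - 1 - (2 * a + 1) = 2 * (n - 1 - a) by omega]
      ring
    simp only [show (2 * a + 1) % 2 ≠ 0 by omega, if_false, hexp]
    exact Nat.modEq_zero_iff_dvd.mpr (dvd_mul_right _ _)

theorem map_shiftedVdm {R S F : Type*} [CommRing R] [CommRing S] [FunLike F R S]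
    [RingHomClass F R S] (f : F) {N : ℕ}
    (lam : Fin N → ℕ) (v : Fin N → R) : f (shiftedVdm lam v) = shiftedVdm lam (f ∘ v) := by
  rw [shiftedVdm, ← RingHom.coe_coe f, RingHom.map_det]
  congr 1
  ext i j
  simp

theorem map_vdmProd {R S F : Type*} [CommRing R] [CommRing S] [FunLike F R S]
    [RingHomClass F R S] (f : F) {N : ℕ}
    (v : Fin N → R) : f (vdmProd v) = vdmProd (f ∘ v) := by
  simp [vdmProd, map_prod, map_sub]

theorem vdmProd_ne_zero {R : Type*} [CommRing R] [NoZeroDivisors R] [Nontrivial R] {N : ℕ}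
    {v : Fin N → R} (hv : Function.Injective v) : vdmProd v ≠ 0 :=
  Finset.prod_ne_zero_iff.mpr fun _ _ => Finset.prod_ne_zero_iff.mpr fun _ hj =>
    sub_ne_zero.mpr (hv.ne (Finset.mem_Ioi.mp hj).ne)

theorem aeval_eq_zero_of_shiftedVdm_eq_zero {R A : Type*} [CommRing R] [CommRing A]
    [Algebra R A] [NoZeroDivisors A] [Nontrivial A] {N : ℕ} {lam : Fin N → ℕ}
    {S : MvPolynomial (Fin N) R} (hS : shiftedVdm lam (fun i => X i) = S * vdmProd (fun i => X i))
    {v : Fin N → A} (hv : Function.Injective v) (h0 : shiftedVdm lam v = 0) : aeval v S = 0 := by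
  have h := congrArg (aeval v) hS
  rw [map_mul, map_shiftedVdm, map_vdmProd] at h
  simp only [Function.comp_def, aeval_X] at h
  exact (mul_eq_zero.mp (h0 ▸ h).symm).resolve_right (vdmProd_ne_zero hv)

section WheelSpecialization

variable {R : Type*} [CommRing R]

noncomputable def wheelSpecialization (N : ℕ) (a b c : R) :
    Fin N → MvPolynomial (Fin (N - 3) ⊕ Unit) R :=
  fun v => if hv : (v : ℕ) < N - 3 then X (Sum.inl ⟨(v : ℕ), hv⟩)
    else if (v : ℕ) = N - 3 then C a * X (Sum.inr ())
    else if (v : ℕ) = N - 2 then C b * X (Sum.inr ())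
    else C c * X (Sum.inr ())

theorem X_ne_C_mul_X [Nontrivial R] {σ : Type*} {i j : σ} (hij : i ≠ j) (c : R) :
    X i ≠ (C c * X j : MvPolynomial σ R) := by
  intro h
  rw [C_mul_X_eq_monomial, X, monomial_eq_monomial_iff] at h
  simp [Finsupp.single_left_inj, hij] at h

theorem C_mul_X_left_injective {σ : Type*} (i : σ) :
    Function.Injective fun c : R => (C c * X i : MvPolynomial σ R) := by
  intro a b h
  simpa using congrArg (coeff (Finsupp.single i 1)) h

theorem wheelSpecialization_injective [Nontrivial R] {N : ℕ} {a b c : R}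
    (hab : a ≠ b) (hac : a ≠ c) (hbc : b ≠ c) :
    Function.Injective (wheelSpecialization N a b c) := by
  intro u v huv
  unfold wheelSpecialization at huv
  split_ifs at huv <;>
    first
    | exact Fin.ext (by omega)
    | exact Fin.ext (Fin.mk.inj_iff.mp (Sum.inl_injective (X_injective huv)))
    | exact absurd huv (X_ne_C_mul_X Sum.inl_ne_inr _)
    | exact absurd huv.symm (X_ne_C_mul_X Sum.inl_ne_inr _)
    | exact absurd (C_mul_X_left_injective _ huv) (by assumption)
    | exact absurd (C_mul_X_left_injective _ huv).symm (by assumption)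

end WheelSpecialization

theorem isPrimitiveRoot_qRoot {d : ℕ} (hd : d ≠ 0) : IsPrimitiveRoot (qRoot d) d := by
  simpa [qRoot] using Complex.isPrimitiveRoot_exp d hd

open MvPolynomial in
theorem twoStaircase_wheel_general (n ℓ ℓ' : ℕ) (hn : 2 ≤ n)
    (g h k : ℕ) (hg : g ≤ ℓ + 1) (hh : h ≤ ℓ + 1) (hk : k ≤ ℓ + 1)
    (hgh : g ≠ h) (hgk : g ≠ k) (hhk : h ≠ k)
    (S : MvPolynomial (Fin (2 * n)) ℂ)
    (hS : shiftedVdm (twoStaircase n ℓ ℓ') (fun i => X i)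
        = S * vdmProd (fun i => X i)) :
    aeval (fun v : Fin (2 * n) =>
      if hv : (v : ℕ) < 2 * n - 3 then
        (X (Sum.inl ⟨(v : ℕ), hv⟩) : MvPolynomial (Fin (2 * n - 3) ⊕ Unit) ℂ)
      else if (v : ℕ) = 2 * n - 3 then C (qRoot (ℓ + 2) ^ g) * X (Sum.inr ())
      else if (v : ℕ) = 2 * n - 2 then C (qRoot (ℓ + 2) ^ h) * X (Sum.inr ())
      else C (qRoot (ℓ + 2) ^ k) * X (Sum.inr ())) S = 0 := by
  change aeval (wheelSpecialization (2 * n) (qRoot (ℓ + 2) ^ g) (qRoot (ℓ + 2) ^ h)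
    (qRoot (ℓ + 2) ^ k)) S = 0
  have hq := isPrimitiveRoot_qRoot (d := ℓ + 2) (by omega)
  have hne {a b : ℕ} (ha : a ≤ ℓ + 1) (hb : b ≤ ℓ + 1) (hab : a ≠ b) :
      qRoot (ℓ + 2) ^ a ≠ qRoot (ℓ + 2) ^ b :=
    fun hq' => hab (hq.pow_inj (by omega) (by omega) hq')
  have hroot (p : ℕ) :
      (C (qRoot (ℓ + 2) ^ p) : MvPolynomial (Fin (2 * n - 3) ⊕ Unit) ℂ) ^ (ℓ + 2) = 1 := by
    rw [← map_pow, pow_right_comm, hq.pow_eq_one, one_pow, map_one]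
  refine aeval_eq_zero_of_shiftedVdm_eq_zero hS
    (wheelSpecialization_injective (hne hg hh hgh) (hne hg hk hgk) (hne hh hk hhk)) ?_
  obtain ⟨r₁, hr₁⟩ : ∃ r : Fin (2 * n), (r : ℕ) = 2 * n - 3 := ⟨⟨2 * n - 3, by omega⟩, rfl⟩
  obtain ⟨r₂, hr₂⟩ : ∃ r : Fin (2 * n), (r : ℕ) = 2 * n - 2 := ⟨⟨2 * n - 2, by omega⟩, rfl⟩
  obtain ⟨r₃, hr₃⟩ : ∃ r : Fin (2 * n), (r : ℕ) = 2 * n - 1 := ⟨⟨2 * n - 1, by omega⟩, rfl⟩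
  refine shiftedVdm_eq_zero_of_modEq _ (twoStaircase_add_modEq n ℓ ℓ') _ (w := X (Sum.inr ()))
    (Fin.ne_of_val_ne (by omega) : r₁ ≠ r₂) (Fin.ne_of_val_ne (by omega) : r₁ ≠ r₃)
    (Fin.ne_of_val_ne (by omega) : r₂ ≠ r₃) (hroot g) (hroot h) (hroot k) ?_ ?_ ?_
  all_goals unfold wheelSpecialization; split_ifs <;> first | omega | rfl

open MvPolynomial in
/-- Wheel condition for 2-staircase Schur polynomials: if `q = exp(2πi/(ℓ+2))` and three of
the `2n` arguments of `s_{λ_{n,ℓ,ℓ'}}` are specialized to `q^g w, q^h w, q^k w` for distinct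
`g, h, k ∈ {0,…,ℓ+1}`, the result is the zero polynomial in `ℂ[z_1,…,z_{2n-3}, w]`.
Here `S` is the Schur polynomial of `λ_{n,ℓ,ℓ'}`, characterized by `Δ_λ = S * Δ`. -/
theorem twoStaircase_wheel (n ℓ ℓ' : ℕ) (hn : 2 ≤ n) (hl : ℓ' ≤ ℓ)
    (g h k : ℕ) (hg : g ≤ ℓ + 1) (hh : h ≤ ℓ + 1) (hk : k ≤ ℓ + 1)
    (hgh : g ≠ h) (hgk : g ≠ k) (hhk : h ≠ k)
    (S : MvPolynomial (Fin (2 * n)) ℂ)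
    (hS : shiftedVdm (twoStaircase n ℓ ℓ') (fun i => X i)
        = S * vdmProd (fun i => X i)) :
    aeval (fun v : Fin (2 * n) =>
      if hv : (v : ℕ) < 2 * n - 3 then
        (X (Sum.inl ⟨(v : ℕ), hv⟩) : MvPolynomial (Fin (2 * n - 3) ⊕ Unit) ℂ)
      else if (v : ℕ) = 2 * n - 3 then C (qRoot (ℓ + 2) ^ g) * X (Sum.inr ())
      else if (v : ℕ) = 2 * n - 2 then C (qRoot (ℓ + 2) ^ h) * X (Sum.inr ())
      else C (qRoot (ℓ + 2) ^ k) * X (Sum.inr ())) S = 0 :=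
  twoStaircase_wheel_general n ℓ ℓ' hn g h k hg hh hk hgh hgk hhk S hS
end

section
/- Let n ≥ 2 and 0 ≤ ℓ' ≤ ℓ be integers with gcd(ℓ'+1, ℓ+2) = 1. Then the 2-staircase Schur polynomial s_{λ_{n,ℓ,ℓ'}} ∈ ℂ[z_1,…,z_{2n}] has no linear binomial factors: for every pair of distinct indices 1 ≤ i, j ≤ 2n and every complex number η, the polynomial z_i − η z_j does not divide s_{λ_{n,ℓ,ℓ'}}(z_1,…,z_{2n}) in ℂ[z_1,…,z_{2n}]. -/
/-!
Write `Δ_λ = det (X_k ^ e_c)` with the strictly decreasing exponents `e_c = λ_c + N - 1 - c`.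
After the substitution `X_i ↦ η X_j`, the monomial coming from a permutation `σ` coincides only
with the one coming from `σ * swap i j`, and together they contribute `± (η ^ e_a - η ^ e_b)`,
where `a = σ i`, `b = σ j`. So if `η ^ e_a ≠ η ^ e_b` for some `a, b`, the substituted `Δ_λ` is
nonzero and `X_i - η X_j` cannot divide `S`. For the 2-staircase the first two gaps of `e` are
`ℓ' + 1` and `ℓ - ℓ' + 1`, which are coprime, and the last exponent is `0`; so such `a, b` exist
unless `η = 1`. For `η = 1`, `X_i - X_j` also divides `Δ`, so `(X_i - X_j)²` would divide `Δ_λ`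
and `X_i ∂_i Δ_λ` would vanish after the substitution; the same coefficient comparison, now with
weights `e_a ≠ e_b`, shows that it does not.
-/

open MvPolynomial Finset Equiv Equiv.Perm Function

section Alternant

variable {ι R : Type*} [DecidableEq ι] [CommRing R]

theorem aeval_update_sub_C_mul_X {i j : ι} (hij : i ≠ j) (η : R) :
    aeval (update X i (C η * X j)) (X i - C η * X j) = 0 := by
  simp [update_of_ne hij.symm]

theorem aeval_update_eq_zero_of_dvd {i j : ι} (hij : i ≠ j) {η : R} {p : MvPolynomial ι R}
    (h : X i - C η * X j ∣ p) : aeval (update X i (C η * X j)) p = 0 := by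
  obtain ⟨u, rfl⟩ := h
  rw [map_mul, aeval_update_sub_C_mul_X hij, zero_mul]

theorem aeval_update_X_mul_pderiv_eq_zero_of_sq_dvd {i j : ι} (hij : i ≠ j) {η : R}
    {p : MvPolynomial ι R} (h : (X i - C η * X j) ^ 2 ∣ p) :
    aeval (update X i (C η * X j)) (X i * pderiv i p) = 0 := by
  obtain ⟨u, rfl⟩ := h
  rw [sq, mul_assoc, Derivation.leibniz]
  simp only [smul_eq_mul, map_mul, map_add, aeval_update_sub_C_mul_X hij, zero_mul, mul_zero,
    add_zero]

theorem exists_perm_apply_eq_and_apply_eq {i j a b : ι} (hij : i ≠ j) (hab : a ≠ b) :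
    ∃ σ : Perm ι, σ i = a ∧ σ j = b := by
  have hja : swap i a j ≠ a := fun h => hij (by simpa using congrArg (swap i a) h.symm)
  exact ⟨swap (swap i a j) b * swap i a, by simp [swap_apply_of_ne_of_ne hja.symm hab], by simp⟩

variable [Fintype ι]

/-- The exponent vector of `X ^ f` after the substitution `X_i ↦ X_j`. -/
noncomputable def collapse (i j : ι) (f : ι → ℕ) : ι →₀ ℕ :=
  Finsupp.equivFunOnFinite.symm (update (update f j (f i + f j)) i 0)

theorem collapse_apply_of_ne {i j k : ι} (f : ι → ℕ) (hki : k ≠ i) (hkj : k ≠ j) :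
    collapse i j f k = f k := by
  simp [collapse, update_of_ne hki, update_of_ne hkj]

theorem collapse_apply_right {i j : ι} (hij : i ≠ j) (f : ι → ℕ) :
    collapse i j f j = f i + f j := by
  simp [collapse, update_of_ne hij.symm]

theorem collapse_comp_swap (i j : ι) (f : ι → ℕ) :
    collapse i j (f ∘ swap i j) = collapse i j f := by
  rcases eq_or_ne i j with rfl | hij
  · simp
  ext k
  by_cases hki : k = i
  · subst hki; simp [collapse]
  by_cases hkj : k = j
  · subst hkj; simp [collapse_apply_right hij, add_comm]
  · simp [collapse_apply_of_ne _ hki hkj, swap_apply_of_ne_of_ne hki hkj]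

theorem eq_or_eq_mul_swap_of_collapse_eq {e : ι → ℕ} (he : Injective e) {i j : ι} (hij : i ≠ j)
    {σ τ : Perm ι} (h : collapse i j (e ∘ σ) = collapse i j (e ∘ τ)) :
    τ = σ ∨ τ = σ * swap i j := by
  have hoff : ∀ k, k ≠ i → k ≠ j → τ k = σ k := fun k hki hkj =>
    he (by simpa [collapse_apply_of_ne _ hki hkj] using (DFunLike.congr_fun h k).symm)
  have hsum : e (σ i) + e (σ j) = e (τ i) + e (τ j) := by
    simpa [collapse_apply_right hij] using DFunLike.congr_fun h j
  have hτi : τ i = σ i ∨ τ i = σ j := by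
    by_contra! hne
    set k := σ.symm (τ i)
    have hk : σ k = τ i := σ.apply_symm_apply _
    have hki : k ≠ i := fun h => hne.1 (h ▸ hk).symm
    exact hki (τ.injective (by rw [hoff k hki fun h => hne.2 (h ▸ hk).symm, hk]))
  rcases hτi with hi | hi
  · left
    have hj : τ j = σ j := he (by rw [hi] at hsum; omega)
    ext k
    by_cases hki : k = i
    · rw [hki, hi]
    by_cases hkj : k = j
    · rw [hkj, hj]
    · rw [hoff k hki hkj]
  · right
    have hj : τ j = σ i := he (by rw [hi] at hsum; omega)
    ext k
    by_cases hki : k = i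
    · simp [hki, hi]
    by_cases hkj : k = j
    · simp [hkj, hj]
    · simp [hoff k hki hkj, swap_apply_of_ne_of_ne hki hkj]

theorem sum_sign_smul_monomial_collapse_ne_zero {e : ι → ℕ} (he : Injective e) {i j : ι}
    (hij : i ≠ j) (c : ℕ → R) {a b : ι} (hc : c (e a) ≠ c (e b)) :
    ∑ σ : Perm ι, sign σ • monomial (collapse i j (e ∘ σ)) (c (e (σ i))) ≠ 0 := by
  obtain ⟨σ, hσi, hσj⟩ := exists_perm_apply_eq_and_apply_eq hij (a := a) (b := b)
    fun h => hc (h ▸ rfl)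
  have hne : σ ≠ σ * swap i j := fun h => hij (swap_eq_one_iff.1 (mul_eq_left.1 h.symm))
  intro h
  have hcoeff := congrArg (coeff (collapse i j (e ∘ σ))) h
  rw [coeff_sum, Fintype.sum_eq_add σ (σ * swap i j) hne] at hcoeff
  · simp only [coeff_smul, coeff_monomial, Perm.coe_mul, ← comp_assoc, collapse_comp_swap,
      comp_apply, swap_apply_left, ↓reduceIte, hσi, hσj, Perm.sign_mul, sign_swap hij, mul_neg,
      mul_one, Units.neg_smul, coeff_neg, coeff_zero] at hcoeff
    rw [← smul_neg, ← smul_add, smul_eq_zero_iff_eq, ← sub_eq_add_neg, sub_eq_zero] at hcoeff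
    exact hc hcoeff
  · rintro τ ⟨h1, h2⟩
    have : collapse i j (e ∘ τ) ≠ collapse i j (e ∘ σ) := fun h =>
      (eq_or_eq_mul_swap_of_collapse_eq he hij h.symm).elim h1 h2
    simp [coeff_monomial, this]

theorem prod_update_X_pow {i j : ι} (hij : i ≠ j) (η : R) (f : ι → ℕ) :
    ∏ k, update (X : ι → MvPolynomial ι R) i (C η * X j) k ^ f k =
      C (η ^ f i) * ∏ k, X k ^ update (update f j (f i + f j)) i 0 k := by
  have hj : j ∈ univ.erase i := mem_erase.2 ⟨hij.symm, mem_univ j⟩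
  rw [← mul_prod_erase univ _ (mem_univ i), ← mul_prod_erase univ _ (mem_univ i),
    ← mul_prod_erase _ _ hj, ← mul_prod_erase _ _ hj]
  have hrest : ∀ k ∈ (univ.erase i).erase j,
      update (X : ι → MvPolynomial ι R) i (C η * X j) k ^ f k
        = X k ^ update (update f j (f i + f j)) i 0 k := by
    intro k hk
    obtain ⟨hkj, hki⟩ : k ≠ j ∧ k ≠ i :=
      ⟨(mem_erase.1 hk).1, (mem_erase.1 (mem_erase.1 hk).2).1⟩
    simp [update_of_ne hki, update_of_ne hkj]
  rw [prod_congr rfl hrest]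
  simp only [update_self, update_of_ne hij.symm, mul_pow, C_pow, pow_zero, pow_add, one_mul]
  ring

theorem aeval_update_monomial {i j : ι} (hij : i ≠ j) (η : R) (d : ι →₀ ℕ) (r : R) :
    aeval (update X i (C η * X j)) (monomial d r) = monomial (collapse i j d) (r * η ^ d i) := by
  rw [aeval_monomial, Finsupp.prod_fintype _ _ fun _ => pow_zero _, prod_update_X_pow hij,
    monomial_eq, Finsupp.prod_fintype _ _ fun _ => pow_zero _, algebraMap_eq, C_mul, mul_assoc]
  rfl

noncomputable def alternant (e : ι → ℕ) : MvPolynomial ι R :=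
  (Matrix.of fun k c => (X k : MvPolynomial ι R) ^ e c).det

theorem alternant_eq_sum (e : ι → ℕ) :
    (alternant e : MvPolynomial ι R) =
      ∑ σ : Perm ι, sign σ • monomial (Finsupp.equivFunOnFinite.symm (e ∘ σ)) 1 := by
  rw [alternant, ← Matrix.det_transpose, Matrix.det_apply]
  refine sum_congr rfl fun σ _ => ?_
  rw [monomial_eq, Finsupp.prod_fintype _ _ fun _ => pow_zero _]
  simp

theorem aeval_update_alternant {i j : ι} (hij : i ≠ j) (η : R) (e : ι → ℕ) :
    aeval (update X i (C η * X j)) (alternant e : MvPolynomial ι R) =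
      ∑ σ : Perm ι, sign σ • monomial (collapse i j (e ∘ σ)) (η ^ e (σ i)) := by
  rw [alternant_eq_sum, map_sum]
  refine sum_congr rfl fun σ _ => ?_
  rw [Units.smul_def, map_zsmul, aeval_update_monomial hij, one_mul]
  rfl

theorem aeval_update_X_mul_pderiv_alternant {i j : ι} (hij : i ≠ j) (η : R) (e : ι → ℕ) :
    aeval (update X i (C η * X j)) (X i * pderiv i (alternant e : MvPolynomial ι R)) =
      ∑ σ : Perm ι, sign σ • monomial (collapse i j (e ∘ σ)) (e (σ i) * η ^ e (σ i)) := by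
  rw [alternant_eq_sum, map_sum, mul_sum, map_sum]
  refine sum_congr rfl fun σ _ => ?_
  rw [Units.smul_def, map_zsmul, mul_smul_comm, X_mul_pderiv_monomial, map_zsmul, map_nsmul,
    aeval_update_monomial hij, one_mul, smul_monomial, nsmul_eq_mul]
  rfl

theorem aeval_update_alternant_ne_zero {e : ι → ℕ} (he : Injective e) {i j : ι} (hij : i ≠ j)
    {η : R} {a b : ι} (h : η ^ e a ≠ η ^ e b) :
    aeval (update X i (C η * X j)) (alternant e : MvPolynomial ι R) ≠ 0 := by
  rw [aeval_update_alternant hij]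
  exact sum_sign_smul_monomial_collapse_ne_zero he hij (η ^ ·) h

theorem aeval_update_one_X_mul_pderiv_alternant_ne_zero [CharZero R] {e : ι → ℕ}
    (he : Injective e) {i j : ι} (hij : i ≠ j) :
    aeval (update X i (C (1 : R) * X j)) (X i * pderiv i (alternant e : MvPolynomial ι R)) ≠ 0 := by
  rw [aeval_update_X_mul_pderiv_alternant hij]
  exact sum_sign_smul_monomial_collapse_ne_zero he hij (fun t => (t : R) * 1 ^ t)
    (by simpa using he.ne hij)

end Alternant

theorem sub_dvd_vdmProd {R : Type*} [CommRing R] {N : ℕ} (v : Fin N → R) {i j : Fin N}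
    (hij : i ≠ j) : v i - v j ∣ vdmProd v := by
  wlog h : i < j generalizing i j
  · rw [← neg_sub, neg_dvd]
    exact this hij.symm (lt_of_le_of_ne (not_lt.1 h) hij.symm)
  exact (dvd_prod_of_mem _ (mem_Ioi.2 h)).trans
    (dvd_prod_of_mem (fun k => ∏ l ∈ Ioi k, (v k - v l)) (mem_univ i))

section Staircase

variable {N : ℕ}

def shiftedExp (lam : Fin N → ℕ) (c : Fin N) : ℕ := lam c + (N - 1 - c)

theorem shiftedVdm_X_eq_alternant {R : Type*} [CommRing R] (lam : Fin N → ℕ) :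
    shiftedVdm lam (fun k => (X k : MvPolynomial (Fin N) R)) = alternant (shiftedExp lam) :=
  rfl

theorem shiftedExp_strictAnti {lam : Fin N → ℕ} (h : Antitone lam) :
    StrictAnti (shiftedExp lam) := by
  intro s t hst
  have hlam := h hst.le
  have hst' : (s : ℕ) < t := hst
  have ht := t.isLt
  simp only [shiftedExp]
  omega

theorem antitone_fin_of_succ_le {f : Fin N → ℕ}
    (h : ∀ t (ht : t + 1 < N), f ⟨t + 1, ht⟩ ≤ f ⟨t, by omega⟩) : Antitone f := by
  cases N with
  | zero => exact fun a => a.elim0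
  | succ N => exact Fin.antitone_iff_succ_le.2 fun t => h t t.succ.isLt

variable {n ℓ ℓ' : ℕ}

theorem twoStaircase_of_val_eq_two_mul {t : Fin (2 * n)} {m : ℕ} (ht : (t : ℕ) = 2 * m) :
    twoStaircase n ℓ ℓ' t = (n - 1 - m) * ℓ + ℓ' := by
  rw [twoStaircase, if_pos (by omega), ht, Nat.mul_div_cancel_left _ two_pos]

theorem twoStaircase_of_val_eq_two_mul_add_one {t : Fin (2 * n)} {m : ℕ}
    (ht : (t : ℕ) = 2 * m + 1) : twoStaircase n ℓ ℓ' t = (n - 1 - m) * ℓ := by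
  rw [twoStaircase, if_neg (by omega), ht, show (2 * m + 1 + 1) / 2 = 1 + m by omega, Nat.sub_sub]

theorem twoStaircase_antitone (hl : ℓ' ≤ ℓ) : Antitone (twoStaircase n ℓ ℓ') := by
  refine antitone_fin_of_succ_le fun t ht => ?_
  obtain ⟨m, rfl | rfl⟩ := Nat.even_or_odd' t
  · rw [twoStaircase_of_val_eq_two_mul_add_one rfl, twoStaircase_of_val_eq_two_mul rfl]
    exact Nat.le_add_right _ _
  · rw [twoStaircase_of_val_eq_two_mul (m := m + 1) (by dsimp only; omega),
      twoStaircase_of_val_eq_two_mul_add_one rfl, show n - 1 - m = n - 1 - (m + 1) + 1 by omega,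
      add_mul, one_mul]
    exact Nat.add_le_add_left hl _

theorem shiftedExp_twoStaircase_eq_add_of_even {s t : Fin (2 * n)} {m : ℕ}
    (hs : (s : ℕ) = 2 * m) (ht : (t : ℕ) = s + 1) :
    shiftedExp (twoStaircase n ℓ ℓ') s = shiftedExp (twoStaircase n ℓ ℓ') t + (ℓ' + 1) := by
  rw [shiftedExp, shiftedExp, twoStaircase_of_val_eq_two_mul hs,
    twoStaircase_of_val_eq_two_mul_add_one (ht.trans (congrArg (· + 1) hs))]
  omega

theorem shiftedExp_twoStaircase_eq_add_of_odd (hl : ℓ' ≤ ℓ) {s t : Fin (2 * n)} {m : ℕ}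
    (hs : (s : ℕ) = 2 * m + 1) (ht : (t : ℕ) = s + 1) :
    shiftedExp (twoStaircase n ℓ ℓ') s = shiftedExp (twoStaircase n ℓ ℓ') t + (ℓ - ℓ' + 1) := by
  have hm : n - 1 - m = n - 1 - (m + 1) + 1 := by omega
  rw [shiftedExp, shiftedExp, twoStaircase_of_val_eq_two_mul_add_one hs,
    twoStaircase_of_val_eq_two_mul (m := m + 1) (by omega), hm, add_mul, one_mul]
  omega

theorem exists_pow_shiftedExp_twoStaircase_ne {K : Type*} [CommRing K] [IsDomain K]
    (hn : 2 ≤ n) (hl : ℓ' ≤ ℓ) (hgcd : Nat.gcd (ℓ' + 1) (ℓ + 2) = 1) {η : K} (hη : η ≠ 1) :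
    ∃ a b, η ^ shiftedExp (twoStaircase n ℓ ℓ') a ≠ η ^ shiftedExp (twoStaircase n ℓ ℓ') b := by
  by_cases hη0 : η = 0
  · refine ⟨⟨0, by omega⟩, ⟨2 * n - 1, by omega⟩, ?_⟩
    have hlast : shiftedExp (twoStaircase n ℓ ℓ') ⟨2 * n - 1, by omega⟩ = 0 := by
      rw [shiftedExp, twoStaircase_of_val_eq_two_mul_add_one (m := n - 1) (by dsimp only; omega)]
      simp
    have hfirst : shiftedExp (twoStaircase n ℓ ℓ') ⟨0, by omega⟩ ≠ 0 := by
      rw [shiftedExp]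
      dsimp only
      omega
    rw [hlast, hη0, zero_pow hfirst, pow_zero]
    exact zero_ne_one
  have hcop : Nat.Coprime (ℓ' + 1) (ℓ - ℓ' + 1) := by
    rwa [Nat.Coprime, ← Nat.gcd_add_self_right, show ℓ - ℓ' + 1 + (ℓ' + 1) = ℓ + 2 by omega]
  have hcancel : ∀ m d, η ^ (m + d) = η ^ m → η ^ d = 1 := fun m d h =>
    (mul_eq_left₀ (pow_ne_zero m hη0)).1 (by rwa [← pow_add])
  by_contra! h
  have h01 := h ⟨0, by omega⟩ ⟨1, by omega⟩
  have h12 := h ⟨1, by omega⟩ ⟨2, by omega⟩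
  rw [shiftedExp_twoStaircase_eq_add_of_even (t := ⟨1, by omega⟩) (m := 0) rfl rfl] at h01
  rw [shiftedExp_twoStaircase_eq_add_of_odd hl (t := ⟨2, by omega⟩) (m := 0) rfl rfl] at h12
  exact hη ((pow_eq_one_iff_of_coprime hcop).1 ⟨hcancel _ _ h01, hcancel _ _ h12⟩)

end Staircase

open MvPolynomial in
/-- If `gcd(ℓ'+1, ℓ+2) = 1` and `n ≥ 2`, the 2-staircase Schur polynomial
`s_{λ_{n,ℓ,ℓ'}} ∈ ℂ[z_1,…,z_{2n}]` (characterized by `Δ_λ = S * Δ`) has no linear binomial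
factor `z_i - η z_j`. -/
theorem twoStaircase_no_binomial_factor (n ℓ ℓ' : ℕ) (hn : 2 ≤ n) (hl : ℓ' ≤ ℓ)
    (hgcd : Nat.gcd (ℓ' + 1) (ℓ + 2) = 1)
    (S : MvPolynomial (Fin (2 * n)) ℂ)
    (hS : shiftedVdm (twoStaircase n ℓ ℓ') (fun i => X i)
        = S * vdmProd (fun i => X i)) :
    ∀ i j : Fin (2 * n), i ≠ j → ∀ η : ℂ, ¬ (X i - C η * X j ∣ S) := by
  intro i j hij η hdvd
  have he : Injective (shiftedExp (twoStaircase n ℓ ℓ')) :=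
    (shiftedExp_strictAnti (twoStaircase_antitone hl)).injective
  rw [shiftedVdm_X_eq_alternant] at hS
  rcases eq_or_ne η 1 with rfl | hη
  · have hsq : (X i - C 1 * X j) ^ 2 ∣ (alternant (shiftedExp (twoStaircase n ℓ ℓ')) :
        MvPolynomial (Fin (2 * n)) ℂ) := by
      rw [hS, sq]
      exact mul_dvd_mul hdvd (by simpa using sub_dvd_vdmProd (fun k => X k) hij)
    exact aeval_update_one_X_mul_pderiv_alternant_ne_zero he hij
      (aeval_update_X_mul_pderiv_eq_zero_of_sq_dvd hij hsq)
  · obtain ⟨a, b, hab⟩ := exists_pow_shiftedExp_twoStaircase_ne hn hl hgcd hη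
    exact aeval_update_alternant_ne_zero he hij hab
      (aeval_update_eq_zero_of_dvd hij (hS ▸ dvd_mul_of_dvd_left hdvd _))
end

section
/- Let m ≥ 1, ℓ ≥ 0 and N ≥ 1 be integers, and write N = am + b with a ≥ 0 and 1 ≤ b ≤ m. Let s_{N,m,ℓ} ∈ ℂ[z_1,…,z_N] denote the m-staircase Schur polynomial associated with the zero partition λ' = (0,…,0) of length m. Then: (i) the total degree of s_{N,m,ℓ} equals aℓ(m(a−1)/2 + b); (ii) the degree of s_{N,m,ℓ} in each single variable z_i equals aℓ; and (iii) if N ≥ m, the maximal combined degree of s_{N,m,ℓ} in any m of its variables — i.e., the maximum over monomials z^α occurring in s_{N,m,ℓ} and over m-element subsets S ⊆ {1,…,N} of Σ_{i∈S} α_i — equals (N−m)ℓ. -/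
/-- The `m`-staircase partition `λ(N,m,ℓ,λ')` of length `N`: its `j`-th part (1-based) is
`ℓa + λ'_{m-b}` where `N - j = am + b`, `a ≥ 0`, `0 ≤ b ≤ m-1`. -/
def mStaircase (N m ℓ : ℕ) (hm : 0 < m) (lam' : Fin m → ℕ) : Fin N → ℕ := fun t =>
  ℓ * ((N - 1 - (t : ℕ)) / m) +
    lam' ⟨m - 1 - (N - 1 - (t : ℕ)) % m, by omega⟩

open MvPolynomial in
/-- A polynomial `P ∈ ℂ[z_1,…,z_N]` satisfies the `(m,ℓ)`-wheel condition if substituting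
`z_{i_a} = q^{k_a} w` (with `q = exp(2πi/(ℓ+m))`, `w` a fresh variable) for any `m+1` distinct
indices `i_a` and any `m+1` distinct `k_a ∈ {1,…,ℓ+m}` yields the zero polynomial.  The
substitution is encoded by an assignment `g` fixing all other variables. -/
def WheelCondition (N m ℓ : ℕ) (P : MvPolynomial (Fin N) ℂ) : Prop :=
  ∀ idx : Fin (m + 1) → Fin N, Function.Injective idx →
  ∀ ks : Fin (m + 1) → ℕ, Function.Injective ks → (∀ a, 1 ≤ ks a ∧ ks a ≤ ℓ + m) →
  ∀ g : Fin N → MvPolynomial (Fin N ⊕ Unit) ℂ,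
    (∀ a, g (idx a) = C (qRoot (ℓ + m) ^ ks a) * X (Sum.inr ())) →
    (∀ r, (∀ a, idx a ≠ r) → g r = X (Sum.inl r)) →
    MvPolynomial.aeval g P = 0


/-!
For a finite set `T` of variables let `d_T(p)` be the largest degree in the variables of `T` of a
monomial of `p`, i.e. the weighted total degree for the indicator weight of `T`. Over a domain
`d_T` is additive on products, being the `natDegree` of the image of `p` under
`X i ↦ t ^ [i ∈ T] • X i`. The monomials of `Δ_λ = det (z_i ^ e_j)`, `e_j = λ_j + N - j`, are the
rearrangements `z ^ (e ∘ σ)`, so by the rearrangement inequality `d_T(Δ_λ)` is the sum of the `|T|`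
largest exponents `e_j`. As `Δ = ±Δ_0`, this gives `d_T(s_λ) = λ_1 + ⋯ + λ_{|T|}`, which for the
`m`-staircase is `ℓ ∑_{t < |T|} ⌊(N - 1 - t) / m⌋`; the three degrees are the cases where `T` is
all variables, one variable, and `m` variables.
-/

open Finset Equiv MvPolynomial
open Finsupp (weight equivFunOnFinite)

theorem Finsupp.weight_indicator_one {σ : Type*} [Fintype σ] (T : Finset σ) (α : σ →₀ ℕ) :
    weight ((T : Set σ).indicator 1) α = ∑ i ∈ T, α i := by
  classical
  simp [Finsupp.weight_eq_sum, Set.indicator_apply, sum_ite_mem]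

namespace MvPolynomial

section WeightedDegree

variable {R σ : Type*} [CommSemiring R] (w : σ → ℕ)

noncomputable def weightedScaling : MvPolynomial σ R →ₐ[R] Polynomial (MvPolynomial σ R) :=
  aeval fun i => Polynomial.monomial (w i) (X i)

theorem weightedScaling_monomial (α : σ →₀ ℕ) (c : R) :
    weightedScaling w (monomial α c) = Polynomial.monomial (weight w α) (monomial α c) := by
  induction α using Finsupp.induction generalizing c with
  | zero => simp [weightedScaling, ← Polynomial.C_mul_X_pow_eq_monomial]
  | single_add i k α _ _ ih =>
    rw [monomial_single_add, map_mul, ih, map_pow, weightedScaling, aeval_X,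
      Polynomial.monomial_pow, Polynomial.monomial_mul_monomial, map_add, Finsupp.weight_single,
      smul_eq_mul, mul_comm k]

theorem coeff_weightedScaling (p : MvPolynomial σ R) (n : ℕ) :
    (weightedScaling w p).coeff n = weightedHomogeneousComponent w n p := by
  classical
  conv_lhs => rw [← p.support_sum_monomial_coeff]
  simp only [map_sum, weightedScaling_monomial, Polynomial.finsetSum_coeff,
    Polynomial.coeff_monomial, weightedHomogeneousComponent_apply, sum_filter]

variable {w}

theorem exists_weight_eq_weightedTotalDegree {p : MvPolynomial σ R} (hp : p ≠ 0) :
    ∃ α ∈ p.support, weight w α = weightedTotalDegree w p :=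
  (exists_mem_eq_sup _ (support_nonempty.mpr hp) _).imp fun _ h => ⟨h.1, h.2.symm⟩

theorem coeff_weightedScaling_weightedTotalDegree_ne_zero {p : MvPolynomial σ R}
    (hp : p ≠ 0) : (weightedScaling w p).coeff (weightedTotalDegree w p) ≠ 0 := by
  classical
  obtain ⟨α, hα, hdeg⟩ := exists_weight_eq_weightedTotalDegree (w := w) hp
  rw [coeff_weightedScaling]
  refine ne_zero_iff.mpr ⟨α, ?_⟩
  rwa [coeff_weightedHomogeneousComponent, if_pos hdeg, ← mem_support_iff]

theorem natDegree_weightedScaling {p : MvPolynomial σ R} (hp : p ≠ 0) :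
    (weightedScaling w p).natDegree = weightedTotalDegree w p := by
  refine Polynomial.natDegree_eq_of_le_of_coeff_ne_zero ?_
    (coeff_weightedScaling_weightedTotalDegree_ne_zero hp)
  refine Polynomial.natDegree_le_iff_coeff_eq_zero.mpr fun n hn => ?_
  rw [coeff_weightedScaling]
  exact weightedHomogeneousComponent_eq_zero _ _ (by exact_mod_cast hn)

theorem weightedTotalDegree_mul_of_isDomain [NoZeroDivisors R] {p q : MvPolynomial σ R}
    (hp : p ≠ 0) (hq : q ≠ 0) :
    weightedTotalDegree w (p * q) = weightedTotalDegree w p + weightedTotalDegree w q := by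
  have scaling_ne_zero {r : MvPolynomial σ R} (hr : r ≠ 0) : weightedScaling w r ≠ 0 :=
    fun h => coeff_weightedScaling_weightedTotalDegree_ne_zero hr (by rw [h, Polynomial.coeff_zero])
  rw [← natDegree_weightedScaling hp, ← natDegree_weightedScaling hq,
    ← natDegree_weightedScaling (mul_ne_zero hp hq), map_mul,
    Polynomial.natDegree_mul (scaling_ne_zero hp) (scaling_ne_zero hq)]

end WeightedDegree

theorem weightedTotalDegree_neg {R σ : Type*} [CommRing R] (w : σ → ℕ) (p : MvPolynomial σ R) :
    weightedTotalDegree w (-p) = weightedTotalDegree w p := by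
  rw [weightedTotalDegree, support_neg, weightedTotalDegree]

section PowerDeterminant

variable {R ι : Type*} [CommRing R] [Fintype ι] [DecidableEq ι]

theorem det_X_pow_eq_sum (e : ι → ℕ) :
    (Matrix.of fun i j : ι => (X i : MvPolynomial ι R) ^ e j).det =
      ∑ σ : Perm ι, (Perm.sign σ : ℤ) • monomial (equivFunOnFinite.symm (e ∘ σ)) (1 : R) := by
  rw [← Matrix.det_transpose, Matrix.det_apply]
  refine sum_congr rfl fun σ _ => ?_
  rw [Units.smul_def, ← prod_X_pow_eq_monomial,
    prod_subset (s₁ := (equivFunOnFinite.symm (e ∘ σ)).support) (subset_univ _)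
      fun i _ hi => by rw [Finsupp.notMem_support_iff.mp hi, pow_zero]]
  rfl

variable [Nontrivial R]

theorem support_det_X_pow {e : ι → ℕ} (he : Function.Injective e) :
    (Matrix.of fun i j : ι => (X i : MvPolynomial ι R) ^ e j).det.support =
      univ.image fun σ : Perm ι => equivFunOnFinite.symm (e ∘ σ) := by
  have hinj : Function.Injective fun σ : Perm ι => equivFunOnFinite.symm (e ∘ σ) :=
    fun σ τ h => Equiv.ext fun i => he (congrFun (equivFunOnFinite.symm.injective h) i)
  ext α
  simp only [mem_support_iff, det_X_pow_eq_sum, coeff_sum, coeff_smul, coeff_monomial, mem_image,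
    mem_univ, true_and]
  constructor
  · intro h
    by_contra! hα
    exact h (sum_eq_zero fun σ _ => by rw [if_neg (hα σ), smul_zero])
  · rintro ⟨σ, rfl⟩
    rw [Finset.sum_eq_single σ (fun τ _ hτ => by rw [if_neg (hinj.ne hτ), smul_zero]) (by simp),
      if_pos rfl]
    rcases Int.units_eq_one_or (Perm.sign σ) with h | h <;> simp [h]

theorem weightedTotalDegree_det_X_pow {e : ι → ℕ} (he : Function.Injective e) (w : ι → ℕ) :
    weightedTotalDegree w (Matrix.of fun i j : ι => (X i : MvPolynomial ι R) ^ e j).det =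
      univ.sup fun σ : Perm ι => ∑ i, w i * e (σ i) := by
  rw [weightedTotalDegree, support_det_X_pow he, sup_image]
  refine sup_congr rfl fun σ _ => ?_
  simp [Finsupp.weight_eq_sum, mul_comm]

end PowerDeterminant

end MvPolynomial

theorem sup_perm_sum_mul_comp_eq {ι : Type*} [Fintype ι] [LinearOrder ι] {w e : ι → ℕ}
    (τ : Perm ι) (hw : Antitone (w ∘ τ)) (he : Antitone e) :
    (univ.sup fun σ : Perm ι => ∑ i, w i * e (σ i)) = ∑ j, w (τ j) * e j := by
  refine le_antisymm (Finset.sup_le fun σ _ => ?_) (le_sup_of_le (mem_univ τ⁻¹) ?_)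
  · rw [← Equiv.sum_comp τ]
    exact (hw.monovary he).sum_mul_comp_perm_le_sum_mul (σ := σ * τ)
  · rw [← Equiv.sum_comp τ fun i => w i * e (τ⁻¹ i)]
    simp

theorem exists_perm_mem_iff_lt_card {N : ℕ} (T : Finset (Fin N)) :
    ∃ τ : Perm (Fin N), ∀ j, τ j ∈ T ↔ (j : ℕ) < #T := by
  have hcard : Fintype.card {j : Fin N // (j : ℕ) < #T} = Fintype.card T := by
    rw [Fintype.card_subtype, Fin.card_filter_val_lt, Fintype.card_coe,
      min_eq_right (card_le_univ T |>.trans_eq (Fintype.card_fin N))]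
  let f := Fintype.equivOfCardEq hcard
  exact ⟨f.extendSubtype, fun j => ⟨fun h => not_not.mp fun hj => f.extendSubtype_not_mem j hj h,
    f.extendSubtype_mem j⟩⟩

section Vandermonde

variable {R : Type*} [CommRing R] {N : ℕ}

theorem vdmProd_eq_or_eq_neg_shiftedVdm_zero (v : Fin N → R) :
    vdmProd v = shiftedVdm 0 v ∨ vdmProd v = -shiftedVdm 0 v := by
  have hrev :
      shiftedVdm 0 v = Perm.sign (Fin.revPerm : Perm (Fin N)) * (Matrix.vandermonde v).det := by
    rw [← Matrix.det_permute', shiftedVdm]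
    congr 1
    ext i j
    simp only [Matrix.of_apply, Matrix.submatrix_apply, Matrix.vandermonde_apply, Fin.revPerm_apply,
      Fin.val_rev, id, Pi.zero_apply, zero_add]
    congr 1
    omega
  have hflip : vdmProd v = (-1) ^ (∑ i : Fin N, #(Ioi i)) * (Matrix.vandermonde v).det := by
    rw [Matrix.det_vandermonde, vdmProd, ← prod_pow_eq_pow_sum, ← prod_mul_distrib]
    refine prod_congr rfl fun i _ => ?_
    rw [← prod_neg]
    simp
  rcases neg_one_pow_eq_or R (∑ i : Fin N, #(Ioi i)) with h | h <;>
    rcases Int.units_eq_one_or (Perm.sign (Fin.revPerm : Perm (Fin N))) with h' | h' <;>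
    rw [hflip, hrev, h, h'] <;> simp

theorem strictAnti_add_sub_one_sub {lam : Fin N → ℕ} (hlam : Antitone lam) :
    StrictAnti fun j : Fin N => lam j + (N - 1 - j) := fun i j hij => by
  have := hlam hij.le
  have := j.isLt
  simp only [Fin.lt_def] at hij ⊢
  omega

variable [IsDomain R] {lam : Fin N → ℕ}

theorem shiftedVdm_X_ne_zero (hlam : Antitone lam) :
    shiftedVdm lam (X : Fin N → MvPolynomial (Fin N) R) ≠ 0 := by
  rw [shiftedVdm, ← support_nonempty, support_det_X_pow (strictAnti_add_sub_one_sub hlam).injective]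
  exact univ_nonempty.image _

theorem weightedTotalDegree_shiftedVdm (hlam : Antitone lam) (w : Fin N → ℕ) (τ : Perm (Fin N))
    (hτ : Antitone (w ∘ τ)) :
    weightedTotalDegree w (shiftedVdm lam (X : Fin N → MvPolynomial (Fin N) R)) =
      ∑ j, w (τ j) * (lam j + (N - 1 - j)) := by
  have he := strictAnti_add_sub_one_sub hlam
  rw [shiftedVdm, weightedTotalDegree_det_X_pow he.injective,
    sup_perm_sum_mul_comp_eq τ hτ he.antitone]

theorem weightedTotalDegree_vdmProd (w : Fin N → ℕ) (τ : Perm (Fin N)) (hτ : Antitone (w ∘ τ)) :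
    weightedTotalDegree w (vdmProd (X : Fin N → MvPolynomial (Fin N) R)) =
      ∑ j, w (τ j) * (N - 1 - j) := by
  have h0 := weightedTotalDegree_shiftedVdm (R := R) (lam := 0) antitone_const w τ hτ
  simp only [Pi.zero_apply, zero_add] at h0
  rcases vdmProd_eq_or_eq_neg_shiftedVdm_zero (X : Fin N → MvPolynomial (Fin N) R) with h | h <;>
    rw [h]
  · exact h0
  · rw [weightedTotalDegree_neg, h0]

theorem weightedTotalDegree_of_shiftedVdm_eq_mul_vdmProd (hlam : Antitone lam)
    {S : MvPolynomial (Fin N) R} (hS : shiftedVdm lam X = S * vdmProd X) (w : Fin N → ℕ)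
    (τ : Perm (Fin N)) (hτ : Antitone (w ∘ τ)) :
    weightedTotalDegree w S = ∑ j, w (τ j) * lam j := by
  have hprod := hS ▸ shiftedVdm_X_ne_zero hlam
  have hdeg := congrArg (weightedTotalDegree w) hS
  rw [weightedTotalDegree_mul_of_isDomain (left_ne_zero_of_mul hprod)
      (right_ne_zero_of_mul hprod), weightedTotalDegree_shiftedVdm hlam w τ hτ,
    weightedTotalDegree_vdmProd w τ hτ] at hdeg
  simp only [mul_add, sum_add_distrib] at hdeg
  omega

theorem weightedTotalDegree_indicator_of_shiftedVdm_eq_mul_vdmProd (hlam : Antitone lam)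
    {S : MvPolynomial (Fin N) R} (hS : shiftedVdm lam X = S * vdmProd X) (T : Finset (Fin N)) :
    weightedTotalDegree ((T : Set (Fin N)).indicator 1) S =
      ∑ j : Fin N with j.val < #T, lam j := by
  obtain ⟨τ, hτ⟩ := exists_perm_mem_iff_lt_card T
  have hwτ : (T : Set (Fin N)).indicator (1 : Fin N → ℕ) ∘ τ =
      fun j : Fin N => if (j : ℕ) < #T then 1 else 0 :=
    funext fun j => by simp [Set.indicator_apply, hτ j]
  have hanti : Antitone ((T : Set (Fin N)).indicator (1 : Fin N → ℕ) ∘ τ) := by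
    rw [hwτ]
    intro i j hij
    simp only [Fin.le_def] at hij
    dsimp only
    split_ifs <;> omega
  rw [weightedTotalDegree_of_shiftedVdm_eq_mul_vdmProd hlam hS _ τ hanti, sum_filter]
  refine sum_congr rfl fun j _ => ?_
  rw [← Function.comp_apply (f := (T : Set (Fin N)).indicator 1), hwτ]
  exact boole_mul _ _

end Vandermonde

theorem Fin.sum_filter_val_lt_eq_sum_range {M : Type*} [AddCommMonoid M] (f : ℕ → M) {c N : ℕ}
    (h : c ≤ N) : ∑ j : Fin N with j.val < c, f j = ∑ t ∈ range c, f t := by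
  rw [sum_filter, Fin.sum_univ_eq_sum_range (fun t => if t < c then f t else 0), ← sum_filter]
  congr 1
  ext t
  simp only [mem_filter, mem_range]
  omega

theorem Nat.sum_range_mul_add_div (a : ℕ) {m b : ℕ} (hm : 0 < m) (hb : b ≤ m) :
    ∑ t ∈ range (a * m + b), t / m = m * a.choose 2 + a * b := by
  induction a with
  | zero =>
    rw [zero_mul, zero_add, Nat.choose_eq_zero_of_lt (by norm_num), mul_zero, zero_mul]
    exact sum_eq_zero fun t ht => Nat.div_eq_of_lt ((mem_range.mp ht).trans_le hb)
  | succ a ih =>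
    have hlow : ∑ t ∈ range m, t / m = 0 :=
      sum_eq_zero fun t ht => Nat.div_eq_of_lt (mem_range.mp ht)
    rw [show (a + 1) * m + b = m + (a * m + b) by ring, sum_range_add, hlow, zero_add]
    simp only [Nat.add_div_left _ hm, sum_add_distrib, ih, sum_const, card_range, smul_eq_mul,
      mul_one, Nat.choose_succ_succ, Nat.choose_one_right]
    ring

theorem Nat.sum_range_add_div_self (n : ℕ) {m : ℕ} (hm : 0 < m) :
    ∑ k ∈ range m, (n + k) / m = n := by
  induction n with
  | zero => simpa using sum_eq_zero fun k hk => Nat.div_eq_of_lt (mem_range.mp hk)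
  | succ n ih =>
    have hshift := sum_range_succ' (fun k => (n + k) / m) m
    rw [sum_range_succ, ih, Nat.add_div_right _ hm] at hshift
    simp only [add_zero, ← add_assoc] at hshift
    simp only [add_right_comm n 1]
    omega

theorem Nat.sum_range_sub_one_sub_div {m N : ℕ} (hm : 0 < m) (hmN : m ≤ N) :
    ∑ t ∈ range m, (N - 1 - t) / m = N - m := by
  rw [← Nat.sum_range_add_div_self (N - m) hm, ← sum_range_reflect]
  refine sum_congr rfl fun t ht => ?_
  rw [mem_range] at ht
  congr 1
  omega

section Staircase

variable {N m ℓ : ℕ} (hm : 0 < m)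

theorem antitone_mStaircase_zero : Antitone (mStaircase N m ℓ hm fun _ => 0) := fun _ _ hij =>
  Nat.add_le_add_right (Nat.mul_le_mul_left ℓ (Nat.div_le_div_right (by omega))) 0

variable {R : Type*} [CommRing R] [IsDomain R] {S : MvPolynomial (Fin N) R}

theorem weightedTotalDegree_indicator_of_mStaircase
    (hS : shiftedVdm (mStaircase N m ℓ hm fun _ => 0) X = S * vdmProd X) (T : Finset (Fin N)) :
    weightedTotalDegree ((T : Set (Fin N)).indicator 1) S =
      ℓ * ∑ t ∈ range #T, (N - 1 - t) / m := by
  rw [weightedTotalDegree_indicator_of_shiftedVdm_eq_mul_vdmProd (antitone_mStaircase_zero hm) hS,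
    mul_sum, ← Fin.sum_filter_val_lt_eq_sum_range (fun t => ℓ * ((N - 1 - t) / m))
      (card_le_univ T |>.trans_eq (Fintype.card_fin N))]
  rfl

end Staircase

open MvPolynomial in
theorem mStaircase_degrees_general (N m ℓ a b : ℕ) (hm : 1 ≤ m)
    (hab : N = a * m + b) (hb1 : 1 ≤ b) (hbm : b ≤ m)
    (S : MvPolynomial (Fin N) ℂ)
    (hS : shiftedVdm (mStaircase N m ℓ hm (fun _ => 0)) (fun i => X i)
        = S * vdmProd (fun i => X i)) :
    S.totalDegree = ℓ * (m * Nat.choose a 2 + a * b) ∧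
    (∀ i : Fin N, S.degreeOf i = a * ℓ) ∧
    (m ≤ N →
      (∀ α ∈ S.support, ∀ T : Finset (Fin N), T.card = m → ∑ i ∈ T, α i ≤ (N - m) * ℓ) ∧
      (∃ α ∈ S.support, ∃ T : Finset (Fin N), T.card = m ∧ ∑ i ∈ T, α i = (N - m) * ℓ)) := by
  have hdeg := weightedTotalDegree_indicator_of_mStaircase hm hS
  refine ⟨?_, fun i => ?_, fun hmN => ?_⟩
  · rw [← weightedTotalDegree_one, ← Set.indicator_univ (1 : Fin N → ℕ), ← coe_univ, hdeg,
      card_univ, Fintype.card_fin, sum_range_reflect (fun t => t / m), hab,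
      Nat.sum_range_mul_add_div a hm hbm]
  · rw [← weightedTotalDegree_piSingle, ← Pi.one_apply (M := fun _ : Fin N => ℕ) i,
      ← Set.indicator_singleton, ← coe_singleton, hdeg, card_singleton, sum_range_one,
      show N - 1 - 0 = b - 1 + a * m by omega, Nat.add_mul_div_right _ _ hm,
      Nat.div_eq_of_lt (by omega), zero_add, mul_comm]
  have hdeg_m {T : Finset (Fin N)} (hT : #T = m) :
      weightedTotalDegree ((T : Set (Fin N)).indicator 1) S = (N - m) * ℓ := by
    rw [hdeg, hT, Nat.sum_range_sub_one_sub_div hm hmN, mul_comm]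
  refine ⟨fun α hα T hT => ?_, ?_⟩
  · rw [← Finsupp.weight_indicator_one, ← hdeg_m hT]
    exact le_weightedTotalDegree _ hα
  · obtain ⟨T, -, hT⟩ := exists_subset_card_eq (s := (univ : Finset (Fin N))) (by simpa)
    have hS0 : S ≠ 0 :=
      left_ne_zero_of_mul (hS ▸ shiftedVdm_X_ne_zero (antitone_mStaircase_zero hm))
    obtain ⟨α, hα, hα_max⟩ :=
      exists_weight_eq_weightedTotalDegree (w := (T : Set (Fin N)).indicator 1) hS0
    exact ⟨α, hα, T, hT, by rw [← Finsupp.weight_indicator_one, hα_max, hdeg_m hT]⟩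

open MvPolynomial in
/-- Degrees of `s_{N,m,ℓ}` (the `m`-staircase Schur polynomial with `λ' = 0`, characterized
by `Δ_λ = S * Δ`), with `N = am + b`, `1 ≤ b ≤ m`:
(i) total degree `aℓ(m(a-1)/2 + b) = ℓ(m·C(a,2) + ab)`;
(ii) degree `aℓ` in each single variable;
(iii) if `N ≥ m`, maximal combined degree in any `m` variables equal to `(N-m)ℓ`. -/
theorem mStaircase_degrees (N m ℓ a b : ℕ) (hN : 1 ≤ N) (hm : 1 ≤ m)
    (hab : N = a * m + b) (hb1 : 1 ≤ b) (hbm : b ≤ m)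
    (S : MvPolynomial (Fin N) ℂ)
    (hS : shiftedVdm (mStaircase N m ℓ hm (fun _ => 0)) (fun i => X i)
        = S * vdmProd (fun i => X i)) :
    S.totalDegree = ℓ * (m * Nat.choose a 2 + a * b) ∧
    (∀ i : Fin N, S.degreeOf i = a * ℓ) ∧
    (m ≤ N →
      (∀ α ∈ S.support, ∀ T : Finset (Fin N), T.card = m → ∑ i ∈ T, α i ≤ (N - m) * ℓ) ∧
      (∃ α ∈ S.support, ∃ T : Finset (Fin N), T.card = m ∧ ∑ i ∈ T, α i = (N - m) * ℓ)) :=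
  mStaircase_degrees_general N m ℓ a b hm hab hb1 hbm S hS
end
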